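/- Let σ ∈ (1,2), 0 < ε ≤ 1, and for s ≥ 0 define Θ_ε(s) = (ε+s)^σ/σ − ε^σ/σ − ε^{σ−1} s. Then Θ_ε(s) ≥ s^σ/(2σ) − (ε^σ/σ)(1 + (σ−1) 2^{1/(σ−1)}) for all s ≥ 0. -/

import Mathlib

/-!
Superadditivity of `s ↦ s ^ σ` gives `(ε + s) ^ σ / σ - ε ^ σ / σ ≥ s ^ σ / σ`, and Young's
inequality with weight `2` absorbs the linear term: `ε ^ (σ - 1) * s` is at most
`s ^ σ / (2σ)` plus `(σ - 1) / σ * 2 ^ (1 / (σ - 1)) * ε ^ σ`.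
-/

open Real

theorem Real.add_rpow_le_rpow_add_of_nonneg {a b p : ℝ} (ha : 0 ≤ a) (hb : 0 ≤ b) (hp : 1 ≤ p) :
    a ^ p + b ^ p ≤ (a + b) ^ p := by
  lift a to NNReal using ha
  lift b to NNReal using hb
  exact_mod_cast NNReal.add_rpow_le_rpow_add a b hp

/-- Young's inequality `x y ≤ x^q / q + y^p / p` with `q = p / (p - 1)`, after rescaling
`x = a ^ (p - 1) c ^ (1 / p)` and `y = b c ^ (-1 / p)`. -/
theorem Real.rpow_sub_one_mul_le_weighted_young {a b p c : ℝ} (ha : 0 ≤ a) (hb : 0 ≤ b)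
    (hp : 1 < p) (hc : 0 < c) :
    a ^ (p - 1) * b ≤ (p - 1) / p * c ^ (1 / (p - 1)) * a ^ p + b ^ p / (c * p) := by
  have hp0 : 0 < p := by linarith
  have hp1 : 0 < p - 1 := by linarith
  have hconj : (p / (p - 1)).HolderConjugate p := by
    rw [Real.holderConjugate_iff]
    refine ⟨by rw [lt_div_iff₀ hp1]; linarith, by field_simp; ring⟩
  have hroot : 0 < c ^ (1 / p) := by positivity
  have hx : (a ^ (p - 1) * c ^ (1 / p)) ^ (p / (p - 1)) = a ^ p * c ^ (1 / (p - 1)) := by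
    rw [mul_rpow (by positivity) hroot.le, ← rpow_mul ha, ← rpow_mul hc.le]
    congr 2 <;> field_simp
  have hy : (b / c ^ (1 / p)) ^ p = b ^ p / c := by
    rw [div_rpow hb hroot.le, ← rpow_mul hc.le, one_div_mul_cancel hp0.ne', rpow_one]
  have young := young_inequality_of_nonneg (a := a ^ (p - 1) * c ^ (1 / p)) (by positivity)
    (div_nonneg hb hroot.le) hconj
  rw [hx, hy] at young
  calc a ^ (p - 1) * b = a ^ (p - 1) * c ^ (1 / p) * (b / c ^ (1 / p)) := by field_simp
    _ ≤ a ^ p * c ^ (1 / (p - 1)) / (p / (p - 1)) + b ^ p / c / p := young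
    _ = _ := by field_simp

theorem Theta_lower_bound_general (σ ε : ℝ) (hσ1 : 1 < σ)
    (hε0 : 0 < ε) :
    ∀ s : ℝ, 0 ≤ s →
      s ^ σ / (2 * σ) - (ε ^ σ / σ) * (1 + (σ - 1) * (2 : ℝ) ^ (1 / (σ - 1)))
        ≤ (ε + s) ^ σ / σ - ε ^ σ / σ - ε ^ (σ - 1) * s := by
  intro s hs
  have hσ0 : 0 < σ := by linarith
  have superadd : ε ^ σ / σ + s ^ σ / σ ≤ (ε + s) ^ σ / σ := by
    rw [← add_div]
    exact div_le_div_of_nonneg_right (add_rpow_le_rpow_add_of_nonneg hε0.le hs hσ1.le) hσ0.le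
  have young := rpow_sub_one_mul_le_weighted_young hε0.le hs hσ1 two_pos
  have split : (ε ^ σ / σ) * (1 + (σ - 1) * (2 : ℝ) ^ (1 / (σ - 1)))
      = ε ^ σ / σ + (σ - 1) / σ * (2 : ℝ) ^ (1 / (σ - 1)) * ε ^ σ := by
    field_simp
  have half : s ^ σ / σ = s ^ σ / (2 * σ) + s ^ σ / (2 * σ) := by
    field_simp; ring
  linarith [show 0 ≤ ε ^ σ / σ by positivity]

theorem Theta_lower_bound (σ ε : ℝ) (hσ1 : 1 < σ) (hσ2 : σ < 2)
    (hε0 : 0 < ε) (hε1 : ε ≤ 1) :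
    ∀ s : ℝ, 0 ≤ s →
      s ^ σ / (2 * σ) - (ε ^ σ / σ) * (1 + (σ - 1) * (2 : ℝ) ^ (1 / (σ - 1)))
        ≤ (ε + s) ^ σ / σ - ε ^ σ / σ - ε ^ (σ - 1) * s :=
  Theta_lower_bound_general σ ε hσ1 hε0
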